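/- With f̃(x₀, x') = (x₁, x₀x₁, …, xₙ, x₀xₙ) as above, and β = Σⱼ (xⱼ dyⱼ − yⱼ dxⱼ) the standard primitive 1-form on ℝ^{2n} (in coordinates (x₁,y₁,…,xₙ,yₙ)), the pullback f̃*β equals (Σⱼ₌₁ⁿ xⱼ²) dx₀. In particular, the restriction of f̃*β to the unit sphere S^n ⊂ ℝ^{n+1} equals the restriction of the exact form d(x₀ − x₀³/3). -/

import Mathlib

/- On `(xⱼ, yⱼ) = (xⱼ, x₀xⱼ)` the form `xⱼ dyⱼ − yⱼ dxⱼ` is `xⱼ (x₀ dxⱼ + xⱼ dx₀) − x₀xⱼ dxⱼ = xⱼ² dx₀`,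
so `f̃*β = (Σⱼ xⱼ²) dx₀`. On the sphere `Σⱼ xⱼ² = 1 − x₀²`, which is the derivative of
`t ↦ t − t³/3` at `x₀`. -/

open scoped RealInnerProductSpace

/-- The map `f̃(x₀, x₁, …, xₙ) = (x₁, x₀x₁, …, xₙ, x₀xₙ)` from `ℝ^{n+1}` to `ℝ^{2n}`. -/
def ftilde (n : ℕ) (x : EuclideanSpace ℝ (Fin (n + 1))) : Fin n → ℝ × ℝ :=
  fun j => (x j.succ, x 0 * x j.succ)

theorem EuclideanSpace.hasFDerivAt_apply {ι : Type*} (x : EuclideanSpace ℝ ι) (i : ι) :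
    HasFDerivAt (fun y : EuclideanSpace ℝ ι => y i) (EuclideanSpace.proj (𝕜 := ℝ) i) x :=
  (EuclideanSpace.proj (𝕜 := ℝ) i).hasFDerivAt

theorem EuclideanSpace.fderiv_comp_apply_apply {ι : Type*} [Fintype ι] {g : ℝ → ℝ} {g' : ℝ}
    (x v : EuclideanSpace ℝ ι) (i : ι) (hg : HasDerivAt g g' (x i)) :
    fderiv ℝ (fun y : EuclideanSpace ℝ ι => g (y i)) x v = g' * v i := by
  have h : HasFDerivAt (fun y : EuclideanSpace ℝ ι => g (y i)) (g' • EuclideanSpace.proj i) x :=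
    hg.comp_hasFDerivAt x (EuclideanSpace.hasFDerivAt_apply x i)
  rw [h.fderiv]
  rfl

theorem fderiv_ftilde_apply (n : ℕ) (x v : EuclideanSpace ℝ (Fin (n + 1))) (j : Fin n) :
    fderiv ℝ (ftilde n) x v j = (v j.succ, x 0 * v j.succ + x j.succ * v 0) := by
  have hasFDerivAt_ftilde : HasFDerivAt (ftilde n)
      (ContinuousLinearMap.pi fun j : Fin n =>
        (EuclideanSpace.proj (𝕜 := ℝ) j.succ).prod
          (x 0 • EuclideanSpace.proj j.succ + x j.succ • EuclideanSpace.proj 0)) x :=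
    hasFDerivAt_pi'.2 fun j =>
      (EuclideanSpace.hasFDerivAt_apply x j.succ).prodMk
        ((EuclideanSpace.hasFDerivAt_apply x 0).mul (EuclideanSpace.hasFDerivAt_apply x j.succ))
  rw [hasFDerivAt_ftilde.fderiv]
  rfl

theorem ftilde_pullback_beta_eq_sum_sq_mul (n : ℕ) (x v : EuclideanSpace ℝ (Fin (n + 1))) :
    ∑ j : Fin n, ((ftilde n x j).1 * (fderiv ℝ (ftilde n) x v j).2
        - (ftilde n x j).2 * (fderiv ℝ (ftilde n) x v j).1)
      = (∑ j : Fin n, (x j.succ) ^ 2) * v 0 := by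
  rw [Finset.sum_mul]
  refine Finset.sum_congr rfl fun j _ => ?_
  simp only [ftilde, fderiv_ftilde_apply]
  ring

theorem EuclideanSpace.sum_sq_succ_eq_one_sub_sq_zero {n : ℕ} {x : EuclideanSpace ℝ (Fin (n + 1))}
    (hx : ‖x‖ = 1) : ∑ j : Fin n, x j.succ ^ 2 = 1 - x 0 ^ 2 := by
  have hsum : ∑ i, x i ^ 2 = 1 := by
    rw [← EuclideanSpace.real_norm_sq_eq, hx, one_pow]
  rw [← hsum, Fin.sum_univ_succ]
  ring

/-- The pullback under `f̃` of the primitive 1-form `β = Σⱼ (xⱼ dyⱼ − yⱼ dxⱼ)` equals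
`(Σⱼ xⱼ²) dx₀`; in particular its restriction to the unit sphere `Sⁿ` equals the
restriction of the exact form `d(x₀ − x₀³/3)`. -/
theorem ftilde_pullback_beta (n : ℕ) (x v : EuclideanSpace ℝ (Fin (n + 1))) :
    (∑ j : Fin n, ((ftilde n x j).1 * (fderiv ℝ (ftilde n) x v j).2
        - (ftilde n x j).2 * (fderiv ℝ (ftilde n) x v j).1))
      = (∑ j : Fin n, (x j.succ) ^ 2) * v 0 ∧
    (‖x‖ = 1 → ⟪v, x⟫ = 0 →
      (∑ j : Fin n, ((ftilde n x j).1 * (fderiv ℝ (ftilde n) x v j).2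
          - (ftilde n x j).2 * (fderiv ℝ (ftilde n) x v j).1))
        = fderiv ℝ (fun y : EuclideanSpace ℝ (Fin (n + 1)) => y 0 - (y 0) ^ 3 / 3) x v) := by
  refine ⟨ftilde_pullback_beta_eq_sum_sq_mul n x v, fun hx _ => ?_⟩
  have hderiv : HasDerivAt (fun t : ℝ => t - t ^ 3 / 3) (1 - x 0 ^ 2) (x 0) :=
    ((hasDerivAt_id _).sub ((hasDerivAt_pow 3 _).div_const 3)).congr_deriv (by norm_num)
  rw [ftilde_pullback_beta_eq_sum_sq_mul, EuclideanSpace.sum_sq_succ_eq_one_sub_sq_zero hx,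
    EuclideanSpace.fderiv_comp_apply_apply x v 0 hderiv]
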